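/- Suppose the sequences κ, κ′, d : ℕ → (0,∞) satisfy the Antonets–Zhislin–Shereshevskij conditions. Let Z be a partition of {1,…,N} with 2 ≤ |Z|, and let C ⊆ {1,…,N} be a nonempty cluster which is not contained in any single cluster of Z. Then for every x ∈ M(Z,κ′,κ) one has |P₀[C]x|_m ≥ d(|Z|) · |P_c(Z)x|_m. -/

import Mathlib

/-! STATEMENT 14: on the region `M(Z,κ′,κ)`, a cluster `C` that is split by the partition `Z` satisfies `|P₀[C]x|_m ≥ d(|Z|)|P_c(Z)x|_m`. -/

open MeasureTheory Finset

open scoped RealInnerProductSpace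

noncomputable section

/-- The one-particle space `ℝⁿ`. -/
abbrev Pt (n : ℕ) := EuclideanSpace ℝ (Fin n)

/-- The configuration space `X = (ℝⁿ)^N`. -/
abbrev Conf (N n : ℕ) := Fin N → Pt n

/-- The mass inner product `⟨x,y⟩_m = ∑ i mᵢ ⟨xᵢ, yᵢ⟩`. -/
def minner {N n : ℕ} (mass : Fin N → ℝ) (x y : Conf N n) : ℝ :=
  ∑ i, mass i * ⟪x i, y i⟫

/-- The mass norm `|x|_m`. -/
def mnorm {N n : ℕ} (mass : Fin N → ℝ) (x : Conf N n) : ℝ :=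
  Real.sqrt (minner mass x x)

/-- The space `X₀` of relative positions: `∑ i mᵢ xᵢ = 0`. -/
def X0 {N n : ℕ} (mass : Fin N → ℝ) : Set (Conf N n) :=
  {x | ∑ i, mass i • x i = 0}

/-- Total mass `M[C]` of a cluster `C`. -/
def cmass {N : ℕ} (mass : Fin N → ℝ) (C : Finset (Fin N)) : ℝ := ∑ i ∈ C, mass i

/-- Center of mass `x_c[C]` of the cluster `C`. -/
def com {N n : ℕ} (mass : Fin N → ℝ) (C : Finset (Fin N)) (x : Conf N n) : Pt n :=
  (cmass mass C)⁻¹ • ∑ i ∈ C, mass i • x i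

/-- The `⟨·,·⟩_m`-orthogonal projection `P₀[C]` of `X₀` onto `X₀[C]`:
explicitly, `(P₀[C]x)ᵢ = xᵢ − x_c[C]` for `i ∈ C` and `0` otherwise. -/
def P0C {N n : ℕ} (mass : Fin N → ℝ) (C : Finset (Fin N)) (x : Conf N n) : Conf N n :=
  fun i => if i ∈ C then x i - com mass C x else 0

/-- A partition (cluster decomposition) of the `N`-particle system. -/
abbrev Partn (N : ℕ) := Finpartition (Finset.univ : Finset (Fin N))

/-- The `⟨·,·⟩_m`-orthogonal projection `P_c(Z)` of `X₀` onto `X_c(Z) = X₀ ⊖ X₀(Z)`: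
explicitly, `(P_c(Z)x)ᵢ = x_c[C]` where `C` is the cluster of `Z` containing `i`. -/
def PcZ {N n : ℕ} (mass : Fin N → ℝ) (Z : Partn N) (x : Conf N n) : Conf N n :=
  fun i => ∑ C ∈ Z.parts, if i ∈ C then com mass C x else 0

/-- The `⟨·,·⟩_m`-orthogonal projection `P₀(Z)` of `X₀` onto `X₀(Z) = ⊕_{C ∈ Z} X₀[C]`. -/
def P0Z {N n : ℕ} (mass : Fin N → ℝ) (Z : Partn N) (x : Conf N n) : Conf N n :=
  x - PcZ mass Z x

/-- The cone `K(Z,κ) = {x ∈ X₀ : |P₀(Z)x|_m ≤ κ|P_c(Z)x|_m}` for `|Z| > 1`;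
for the trivial partition (`|Z| = 1`), `K(Z,κ) = {x ∈ X₀ : |x|_m ≤ κ}`. -/
def cone {N n : ℕ} (mass : Fin N → ℝ) (Z : Partn N) (κ : ℝ) : Set (Conf N n) :=
  if 1 < Z.parts.card then
    {x ∈ X0 mass | mnorm mass (P0Z mass Z x) ≤ κ * mnorm mass (PcZ mass Z x)}
  else
    {x ∈ X0 mass | mnorm mass x ≤ κ}

/-- The total mass `M = ∑ i mᵢ`. -/
def totalMass {N : ℕ} (mass : Fin N → ℝ) : ℝ := ∑ i, mass i

/-- The minimal mass `m = minᵢ mᵢ`. -/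
def minMass {N : ℕ} (mass : Fin N → ℝ) : ℝ := ⨅ i, mass i

/-- The Antonets–Zhislin–Shereshevskij conditions on the sequences `κ, κ′, d : ℕ → (0,∞)`:
for every `l ≥ 1`, `0 < κ′(l) < κ(l)` and
`(m³/M³)·(κ′(l)² − κ(l+1)²)/(1 + κ′(l)²) − κ(l+1)² > d(l+1)² > κ(l+1)²(1 + κ(l+1)²)`. -/
def AZS {N : ℕ} (mass : Fin N → ℝ) (κ κ' dd : ℕ → ℝ) : Prop :=
  (∀ l, 0 < κ l ∧ 0 < κ' l ∧ 0 < dd l) ∧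
  ∀ l, 1 ≤ l →
    κ' l < κ l ∧
    (minMass mass ^ 3 / totalMass mass ^ 3) *
        ((κ' l ^ 2 - κ (l + 1) ^ 2) / (1 + κ' l ^ 2)) - κ (l + 1) ^ 2
      > dd (l + 1) ^ 2 ∧
    dd (l + 1) ^ 2 > κ (l + 1) ^ 2 * (1 + κ (l + 1) ^ 2)

/-- The region `M(Z,κ′,κ) = K(Z,κ(|Z|)) \ ⋃_{|Z′| < |Z|} K(Z′,κ′(|Z′|))`. -/
def Mreg {N n : ℕ} (mass : Fin N → ℝ) (κ' κ : ℕ → ℝ) (Z : Partn N) : Set (Conf N n) :=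
  cone mass Z (κ Z.parts.card) \
    ⋃ (Z' : Partn N) (_ : Z'.parts.card < Z.parts.card), cone mass Z' (κ' Z'.parts.card)


/-!
Pick `i, j ∈ C` lying in different clusters `B₁, B₂` of `Z` and fuse these two clusters, which
gives a coarser partition `Z'` with `|Z'| = |Z| - 1`. As `Z` refines `Z'`, the projections split
orthogonally, and `x ∉ K(Z', κ'(|Z| - 1))` forces `Q = P_c(Z)x - P_c(Z')x` to carry at least the
fraction `(κ'² - κ²)/(1 + κ'²)` of `|P_c(Z)x|²`. But `Q` lives on `B₁ ∪ B₂` and is controlled by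
the distance between the centres of mass of `B₁` and `B₂`, which differs from `x_i - x_j` by
components of `P₀(Z)x`, small inside `K(Z, κ(|Z|))`; and `x_i - x_j` is a difference of two
components of `P₀[C]x`.
-/

namespace Finpartition

variable {α : Type*} [DistribLattice α] [OrderBot α] [DecidableEq α] {a b c : α}

@[simps]
def merge (P : Finpartition a) (hb : b ∈ P.parts) (hc : c ∈ P.parts) : Finpartition a where
  parts := insert (b ⊔ c) ((P.parts.erase b).erase c)
  supIndep := by
    have hsub : (P.parts.erase b).erase c ⊆ P.parts := (erase_subset _ _).trans (erase_subset _ _)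
    refine (P.supIndep.subset hsub).insert ?_
    rw [id, disjoint_sup_left]
    exact ⟨P.supIndep hsub hb fun h => (mem_erase.1 (mem_erase.1 h).2).1 rfl,
      P.supIndep hsub hc (notMem_erase _ _)⟩
  sup_parts := by
    refine le_antisymm (Finset.sup_le fun d hd => ?_) ?_
    · rcases mem_insert.1 hd with rfl | hd
      · exact sup_le (P.le hb) (P.le hc)
      · exact P.le ((mem_erase.1 (mem_erase.1 hd).2).2)
    · refine P.sup_parts.symm.le.trans (Finset.sup_le fun d hd => ?_)
      by_cases hdb : d = b
      · exact hdb ▸ le_sup_left.trans (le_sup (f := id) (mem_insert_self _ _))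
      by_cases hdc : d = c
      · exact hdc ▸ le_sup_right.trans (le_sup (f := id) (mem_insert_self _ _))
      exact le_sup (f := id) (mem_insert_of_mem (mem_erase.2 ⟨hdc, mem_erase.2 ⟨hdb, hd⟩⟩))
  bot_notMem h := by
    rcases mem_insert.1 h with h | h
    · exact P.ne_bot hb (sup_eq_bot_iff.1 h.symm).1
    · exact P.bot_notMem ((mem_erase.1 (mem_erase.1 h).2).2)

variable (P : Finpartition a) (hb : b ∈ P.parts) (hc : c ∈ P.parts)

theorem le_merge : P ≤ P.merge hb hc := by
  intro d hd
  by_cases hdb : d = b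
  · exact ⟨b ⊔ c, mem_insert_self _ _, hdb ▸ le_sup_left⟩
  by_cases hdc : d = c
  · exact ⟨b ⊔ c, mem_insert_self _ _, hdc ▸ le_sup_right⟩
  exact ⟨d, mem_insert_of_mem (mem_erase.2 ⟨hdc, mem_erase.2 ⟨hdb, hd⟩⟩), le_rfl⟩

theorem card_merge (hbc : b ≠ c) : #(P.merge hb hc).parts + 1 = #P.parts := by
  have hnot : b ⊔ c ∉ (P.parts.erase b).erase c := fun h => by
    obtain ⟨-, hne, hmem⟩ := by simpa only [mem_erase] using h
    exact hne (P.disjoint.eq_of_le hb hmem (P.ne_bot hb) le_sup_left).symm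
  rw [merge_parts, card_insert_of_notMem hnot,
    card_erase_of_mem (mem_erase.2 ⟨hbc.symm, hc⟩), card_erase_of_mem hb]
  have := card_le_card (insert_subset hb (singleton_subset_iff.2 hc))
  rw [card_pair hbc] at this
  omega

end Finpartition

theorem Finpartition.exists_pair_of_forall_not_subset {α : Type*} [DecidableEq α]
    {s C : Finset α} (P : Finpartition s) (hP : P.parts.Nonempty) (hCs : C ⊆ s)
    (hC : ∀ B ∈ P.parts, ¬ C ⊆ B) :
    ∃ i ∈ C, ∃ j ∈ C, ∃ B₁ ∈ P.parts, ∃ B₂ ∈ P.parts, i ∈ B₁ ∧ j ∈ B₂ ∧ B₁ ≠ B₂ := by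
  obtain ⟨B, hB⟩ := hP
  obtain ⟨j, hjC, -⟩ := not_subset.1 (hC B hB)
  obtain ⟨B₂, hB₂, hjB₂⟩ := P.exists_mem (hCs hjC)
  obtain ⟨i, hiC, hiB₂⟩ := not_subset.1 (hC B₂ hB₂)
  obtain ⟨B₁, hB₁, hiB₁⟩ := P.exists_mem (hCs hiC)
  exact ⟨i, hiC, j, hjC, B₁, hB₁, B₂, hB₂, hiB₁, hjB₂, fun h => hiB₂ (h ▸ hiB₁)⟩

/-- Configurations constant on every part of `P`; inside `X₀` these make up `X_c(P)`. -/
def ConstOnParts {α β : Type*} [DecidableEq α] {s : Finset α} (P : Finpartition s)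
    (y : α → β) : Prop :=
  ∀ B ∈ P.parts, ∀ i ∈ B, ∀ j ∈ B, y i = y j

namespace ConstOnParts

variable {α β : Type*} [DecidableEq α] {s : Finset α} {P Q : Finpartition s} {y z : α → β}

theorem of_le (hPQ : P ≤ Q) (hy : ConstOnParts Q y) : ConstOnParts P y := fun B hB i hi j hj => by
  obtain ⟨B', hB', hBB'⟩ := hPQ hB
  exact hy B' hB' i (hBB' hi) j (hBB' hj)

theorem sub [Sub β] (hy : ConstOnParts P y) (hz : ConstOnParts P z) : ConstOnParts P (y - z) :=
  fun B hB i hi j hj => by simp only [Pi.sub_apply, hy B hB i hi j hj, hz B hB i hi j hj]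

end ConstOnParts

theorem norm_sub_sq_le {E : Type*} [SeminormedAddCommGroup E] (u v : E) :
    ‖u - v‖ ^ 2 ≤ 2 * (‖u‖ ^ 2 + ‖v‖ ^ 2) :=
  (pow_le_pow_left₀ (norm_nonneg _) (norm_sub_le u v) 2).trans add_sq_le

theorem norm_le_norm_sub_of_smul_add_smul_eq_zero {E : Type*} [NormedAddCommGroup E]
    [InnerProductSpace ℝ E] {a b : ℝ} {u v : E} (ha : 0 < a) (hb : 0 ≤ b)
    (h : a • u + b • v = 0) : ‖u‖ ≤ ‖u - v‖ := by
  have hinner : ⟪u, v⟫ ≤ 0 := by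
    have : a * ⟪u, v⟫ = -(b * ‖v‖ ^ 2) := by
      rw [← real_inner_smul_left, eq_neg_of_add_eq_zero_left h, inner_neg_left,
        real_inner_smul_left, real_inner_self_eq_norm_sq]
    nlinarith [sq_nonneg ‖v‖]
  rw [← pow_le_pow_iff_left₀ (norm_nonneg _) (norm_nonneg _) two_ne_zero, norm_sub_sq_real]
  nlinarith [sq_nonneg ‖v‖]

section MassGeometry

variable {N n : ℕ} {mass : Fin N → ℝ}

theorem minner_self_eq_sum (x : Conf N n) : minner mass x x = ∑ i, mass i * ‖x i‖ ^ 2 := by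
  simp only [minner, real_inner_self_eq_norm_sq]

theorem minner_comm (x y : Conf N n) : minner mass x y = minner mass y x := by
  simp only [minner, real_inner_comm]

theorem minner_sub_left (x y z : Conf N n) :
    minner mass (x - y) z = minner mass x z - minner mass y z := by
  simp only [minner, Pi.sub_apply, inner_sub_left, mul_sub, sum_sub_distrib]

theorem mnorm_sq (hm : ∀ i, 0 ≤ mass i) (x : Conf N n) : mnorm mass x ^ 2 = minner mass x x :=
  Real.sq_sqrt <| (minner_self_eq_sum x).symm ▸
    sum_nonneg fun i _ => mul_nonneg (hm i) (sq_nonneg _)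

theorem mnorm_nonneg (x : Conf N n) : 0 ≤ mnorm mass x := Real.sqrt_nonneg _

@[simp]
theorem mnorm_zero : mnorm mass (0 : Conf N n) = 0 := by
  simp [mnorm, minner]

theorem mnorm_add_sq_of_minner_eq_zero (hm : ∀ i, 0 ≤ mass i) {x y : Conf N n}
    (h : minner mass x y = 0) : mnorm mass (x + y) ^ 2 = mnorm mass x ^ 2 + mnorm mass y ^ 2 := by
  have hyx : minner mass y x = 0 := minner_comm x y ▸ h
  simp only [mnorm_sq hm, minner, Pi.add_apply, inner_add_left, inner_add_right, mul_add,
    sum_add_distrib] at h hyx ⊢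
  rw [h, hyx]
  ring

theorem mnorm_sq_le_totalMass_mul (hm : ∀ i, 0 ≤ mass i) {x : Conf N n} {c : ℝ}
    (hx : ∀ i, ‖x i‖ ≤ c) : mnorm mass x ^ 2 ≤ totalMass mass * c ^ 2 := by
  rw [mnorm_sq hm, minner_self_eq_sum, totalMass, sum_mul]
  exact sum_le_sum fun i _ => mul_le_mul_of_nonneg_left
    (pow_le_pow_left₀ (norm_nonneg _) (hx i) 2) (hm i)

theorem mul_norm_sub_sq_le {μ : ℝ} (hμ : 0 ≤ μ) (hμm : ∀ i, μ ≤ mass i) (x : Conf N n)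
    {i j : Fin N} (hij : i ≠ j) : μ * ‖x i - x j‖ ^ 2 ≤ 2 * mnorm mass x ^ 2 := by
  have hm : ∀ k, 0 ≤ mass k := fun k => hμ.trans (hμm k)
  have hpair : mass i * ‖x i‖ ^ 2 + mass j * ‖x j‖ ^ 2 ≤ mnorm mass x ^ 2 := by
    rw [mnorm_sq hm, minner_self_eq_sum, ← sum_pair (f := fun k => mass k * ‖x k‖ ^ 2) hij]
    exact sum_le_sum_of_subset_of_nonneg (subset_univ _) fun k _ _ => by have := hm k; positivity
  calc μ * ‖x i - x j‖ ^ 2 ≤ μ * (2 * (‖x i‖ ^ 2 + ‖x j‖ ^ 2)) :=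
        mul_le_mul_of_nonneg_left (norm_sub_sq_le _ _) hμ
    _ ≤ 2 * (mass i * ‖x i‖ ^ 2 + mass j * ‖x j‖ ^ 2) := by
        nlinarith [mul_le_mul_of_nonneg_right (hμm i) (sq_nonneg ‖x i‖),
          mul_le_mul_of_nonneg_right (hμm j) (sq_nonneg ‖x j‖)]
    _ ≤ 2 * mnorm mass x ^ 2 := by linarith

theorem minMass_le [Nonempty (Fin N)] (i : Fin N) : minMass mass ≤ mass i :=
  ciInf_le (Finite.bddBelow_range mass) i

theorem minMass_pos [Nonempty (Fin N)] (hm : ∀ i, 0 < mass i) : 0 < minMass mass := by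
  obtain ⟨i, hi⟩ := exists_eq_ciInf_of_finite (f := mass)
  rw [minMass, ← hi]
  exact hm i

theorem two_mul_minMass_le_totalMass (hm : ∀ i, 0 ≤ mass i) {i j : Fin N} (hij : i ≠ j) :
    2 * minMass mass ≤ totalMass mass := by
  have : Nonempty (Fin N) := ⟨i⟩
  calc 2 * minMass mass ≤ mass i + mass j := by
        linarith [minMass_le (mass := mass) i, minMass_le (mass := mass) j]
    _ = ∑ k ∈ {i, j}, mass k := (sum_pair hij).symm
    _ ≤ totalMass mass := sum_le_sum_of_subset_of_nonneg (subset_univ _) fun k _ _ => hm k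

end MassGeometry

section Projections

variable {N n : ℕ} {mass : Fin N → ℝ} {Z Z' : Partn N}

theorem PcZ_apply_of_mem {B : Finset (Fin N)} (hB : B ∈ Z.parts) {i : Fin N} (hi : i ∈ B)
    (x : Conf N n) : PcZ mass Z x i = com mass B x := by
  rw [PcZ, sum_eq_single_of_mem B hB fun B' hB' hne =>
    if_neg fun hiB' => hne (Z.eq_of_mem_parts hB' hB hiB' hi), if_pos hi]

theorem constOnParts_PcZ (Z : Partn N) (x : Conf N n) : ConstOnParts Z (PcZ mass Z x) :=
  fun _ hB _ hi _ hj => by rw [PcZ_apply_of_mem hB hi, PcZ_apply_of_mem hB hj]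

theorem cmass_smul_com (hm : ∀ i, 0 < mass i) (B : Finset (Fin N)) (x : Conf N n) :
    cmass mass B • com mass B x = ∑ i ∈ B, mass i • x i := by
  rcases B.eq_empty_or_nonempty with rfl | hB
  · simp [cmass, com]
  · exact smul_inv_smul₀ (sum_pos (fun i _ => hm i) hB).ne' _

theorem cmass_smul_com_sub_com_union (hm : ∀ i, 0 < mass i) {B₁ B₂ : Finset (Fin N)}
    (hdisj : Disjoint B₁ B₂) (x : Conf N n) :
    cmass mass B₁ • (com mass B₁ x - com mass (B₁ ∪ B₂) x) +
      cmass mass B₂ • (com mass B₂ x - com mass (B₁ ∪ B₂) x) = 0 := by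
  have hcmass : cmass mass (B₁ ∪ B₂) = cmass mass B₁ + cmass mass B₂ := sum_union hdisj
  calc _ = cmass mass B₁ • com mass B₁ x + cmass mass B₂ • com mass B₂ x -
        cmass mass (B₁ ∪ B₂) • com mass (B₁ ∪ B₂) x := by rw [hcmass]; module
    _ = 0 := by rw [cmass_smul_com hm, cmass_smul_com hm, cmass_smul_com hm, sum_union hdisj,
        sub_self]

theorem sum_smul_P0Z_of_mem (hm : ∀ i, 0 < mass i) {B : Finset (Fin N)} (hB : B ∈ Z.parts)
    (x : Conf N n) : ∑ i ∈ B, mass i • P0Z mass Z x i = 0 := by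
  calc ∑ i ∈ B, mass i • P0Z mass Z x i = ∑ i ∈ B, mass i • (x i - com mass B x) :=
        sum_congr rfl fun i hi => by rw [P0Z, Pi.sub_apply, PcZ_apply_of_mem hB hi]
    _ = ∑ i ∈ B, mass i • x i - cmass mass B • com mass B x := by
        simp only [smul_sub, sum_sub_distrib, cmass, sum_smul]
    _ = 0 := by rw [cmass_smul_com hm, sub_self]

theorem minner_P0Z_eq_zero (hm : ∀ i, 0 < mass i) {y : Conf N n} (hy : ConstOnParts Z y)
    (x : Conf N n) : minner mass y (P0Z mass Z x) = 0 := by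
  have hsplit := sum_biUnion (f := fun i => mass i * ⟪y i, P0Z mass Z x i⟫) Z.disjoint
  rw [Z.biUnion_parts] at hsplit
  rw [minner, hsplit]
  refine sum_eq_zero fun B hB => ?_
  obtain ⟨i₀, hi₀⟩ := Z.nonempty_of_mem_parts hB
  calc ∑ i ∈ B, mass i * ⟪y i, P0Z mass Z x i⟫ = ⟪y i₀, ∑ i ∈ B, mass i • P0Z mass Z x i⟫ := by
        rw [inner_sum]
        exact sum_congr rfl fun i hi => by rw [real_inner_smul_right, hy B hB i hi i₀ hi₀]
    _ = 0 := by rw [sum_smul_P0Z_of_mem hm hB, inner_zero_right]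

theorem PcZ_eq_zero_of_card_le_one {x : Conf N n} (hx : x ∈ X0 mass) (hZ : #Z.parts ≤ 1) :
    PcZ mass Z x = 0 := by
  funext i
  refine sum_eq_zero fun B hB => ?_
  have hBuniv : B = univ := by
    rw [← Z.sup_parts, (eq_singleton_iff_unique_mem.2 ⟨hB, fun B' hB' =>
      card_le_one.1 hZ B' hB' B hB⟩), sup_singleton, id]
  simp only [hBuniv, mem_univ, if_true, com, smul_eq_zero]
  exact Or.inr hx

theorem PcZ_merge_apply_of_notMem {B₁ B₂ : Finset (Fin N)} (hB₁ : B₁ ∈ Z.parts)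
    (hB₂ : B₂ ∈ Z.parts) {k : Fin N} (hk : k ∉ B₁ ∪ B₂) (x : Conf N n) :
    PcZ mass (Z.merge hB₁ hB₂) x k = PcZ mass Z x k := by
  obtain ⟨B, hB, hkB⟩ := Z.exists_mem (mem_univ k)
  have hB' : B ∈ (Z.merge hB₁ hB₂).parts := mem_insert_of_mem <| mem_erase.2
    ⟨fun h => hk (mem_union_right _ (h ▸ hkB)), mem_erase.2
      ⟨fun h => hk (mem_union_left _ (h ▸ hkB)), hB⟩⟩
  rw [PcZ_apply_of_mem hB hkB, PcZ_apply_of_mem hB' hkB]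

theorem mnorm_PcZ_sq_of_le (hm : ∀ i, 0 < mass i) (hZZ' : Z ≤ Z') (x : Conf N n) :
    mnorm mass (PcZ mass Z x) ^ 2 =
      mnorm mass (PcZ mass Z x - PcZ mass Z' x) ^ 2 + mnorm mass (PcZ mass Z' x) ^ 2 := by
  have hdiff : PcZ mass Z x - PcZ mass Z' x = P0Z mass Z' x - P0Z mass Z x := by
    simp only [P0Z, sub_sub_sub_cancel_left]
  have horth : minner mass (PcZ mass Z x - PcZ mass Z' x) (PcZ mass Z' x) = 0 := by
    rw [hdiff, minner_sub_left, minner_comm, minner_P0Z_eq_zero hm (constOnParts_PcZ Z' x),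
      minner_comm, minner_P0Z_eq_zero hm ((constOnParts_PcZ Z' x).of_le hZZ'), sub_zero]
  rw [← mnorm_add_sq_of_minner_eq_zero (fun i => (hm i).le) horth, sub_add_cancel]

theorem mnorm_P0Z_sq_of_le (hm : ∀ i, 0 < mass i) (hZZ' : Z ≤ Z') (x : Conf N n) :
    mnorm mass (P0Z mass Z' x) ^ 2 =
      mnorm mass (P0Z mass Z x) ^ 2 + mnorm mass (PcZ mass Z x - PcZ mass Z' x) ^ 2 := by
  have hsum : P0Z mass Z' x = P0Z mass Z x + (PcZ mass Z x - PcZ mass Z' x) := by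
    simp only [P0Z, sub_add_sub_cancel]
  have horth : minner mass (P0Z mass Z x) (PcZ mass Z x - PcZ mass Z' x) = 0 := by
    rw [minner_comm, minner_P0Z_eq_zero hm
      ((constOnParts_PcZ Z x).sub ((constOnParts_PcZ Z' x).of_le hZZ'))]
  rw [hsum, mnorm_add_sq_of_minner_eq_zero (fun i => (hm i).le) horth]

end Projections

section Cones

variable {N n : ℕ} {mass : Fin N → ℝ} {Z Z' : Partn N}

theorem mnorm_P0Z_sq_le_of_mem_cone {x : Conf N n} {K : ℝ} (hZ : 1 < #Z.parts)
    (hxK : x ∈ cone mass Z K) :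
    x ∈ X0 mass ∧ mnorm mass (P0Z mass Z x) ^ 2 ≤ K ^ 2 * mnorm mass (PcZ mass Z x) ^ 2 := by
  rw [cone, if_pos hZ] at hxK
  exact ⟨hxK.1, mul_pow K _ 2 ▸ pow_le_pow_left₀ (mnorm_nonneg _) hxK.2 2⟩

theorem le_mnorm_P0Z_sq_of_notMem_cone {x : Conf N n} {K : ℝ} (hK : 0 ≤ K) (hx : x ∈ X0 mass)
    (hxK : x ∉ cone mass Z K) :
    K ^ 2 * mnorm mass (PcZ mass Z x) ^ 2 ≤ mnorm mass (P0Z mass Z x) ^ 2 := by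
  by_cases hZ : 1 < #Z.parts
  · rw [cone, if_pos hZ] at hxK
    rw [← mul_pow]
    exact pow_le_pow_left₀ (mul_nonneg hK (mnorm_nonneg _))
      (le_of_not_ge fun h => hxK ⟨hx, h⟩) 2
  · rw [PcZ_eq_zero_of_card_le_one hx (not_lt.1 hZ), mnorm_zero, zero_pow two_ne_zero, mul_zero]
    exact sq_nonneg _

theorem cone_gap_le (hm : ∀ i, 0 < mass i) (hZZ' : Z ≤ Z') {x : Conf N n} {K K' : ℝ}
    (hZ : mnorm mass (P0Z mass Z x) ^ 2 ≤ K ^ 2 * mnorm mass (PcZ mass Z x) ^ 2)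
    (hZ' : K' ^ 2 * mnorm mass (PcZ mass Z' x) ^ 2 ≤ mnorm mass (P0Z mass Z' x) ^ 2) :
    (K' ^ 2 - K ^ 2) / (1 + K' ^ 2) * mnorm mass (PcZ mass Z x) ^ 2 ≤
      mnorm mass (PcZ mass Z x - PcZ mass Z' x) ^ 2 := by
  rw [mnorm_P0Z_sq_of_le hm hZZ'] at hZ'
  rw [mnorm_PcZ_sq_of_le hm hZZ'] at hZ ⊢
  rw [div_mul_eq_mul_div, div_le_iff₀ (by positivity)]
  nlinarith

theorem mnorm_PcZ_sub_PcZ_merge_sq_le (hm : ∀ i, 0 < mass i) {B₁ B₂ : Finset (Fin N)}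
    (hB₁ : B₁ ∈ Z.parts) (hB₂ : B₂ ∈ Z.parts) (hB : B₁ ≠ B₂) {i j : Fin N} (hi : i ∈ B₁)
    (hj : j ∈ B₂) (x : Conf N n) :
    mnorm mass (PcZ mass Z x - PcZ mass (Z.merge hB₁ hB₂) x) ^ 2 ≤
      totalMass mass * ‖PcZ mass Z x i - PcZ mass Z x j‖ ^ 2 := by
  set Z' := Z.merge hB₁ hB₂
  set Q := PcZ mass Z x - PcZ mass Z' x with hQ
  have hQZ : ConstOnParts Z Q :=
    (constOnParts_PcZ Z x).sub ((constOnParts_PcZ Z' x).of_le (Z.le_merge hB₁ hB₂))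
  have hD : B₁ ∪ B₂ ∈ Z'.parts := mem_insert_self _ _
  have hQi : Q i = com mass B₁ x - com mass (B₁ ∪ B₂) x := by
    simp only [hQ, Pi.sub_apply, PcZ_apply_of_mem hB₁ hi,
      PcZ_apply_of_mem hD (mem_union_left _ hi)]
  have hQj : Q j = com mass B₂ x - com mass (B₁ ∪ B₂) x := by
    simp only [hQ, Pi.sub_apply, PcZ_apply_of_mem hB₂ hj,
      PcZ_apply_of_mem hD (mem_union_right _ hj)]
  have hbal : cmass mass B₁ • Q i + cmass mass B₂ • Q j = 0 := by
    rw [hQi, hQj]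
    exact cmass_smul_com_sub_com_union hm (Z.disjoint hB₁ hB₂ hB) x
  have hcmass : ∀ B ∈ Z.parts, 0 < cmass mass B := fun B hB =>
    sum_pos (fun k _ => hm k) (Z.nonempty_of_mem_parts hB)
  have hnorm : ∀ k, ‖Q k‖ ≤ ‖Q i - Q j‖ := fun k => by
    by_cases hk₁ : k ∈ B₁
    · rw [hQZ B₁ hB₁ k hk₁ i hi]
      exact norm_le_norm_sub_of_smul_add_smul_eq_zero (hcmass B₁ hB₁) (hcmass B₂ hB₂).le hbal
    by_cases hk₂ : k ∈ B₂
    · rw [hQZ B₂ hB₂ k hk₂ j hj, norm_sub_rev]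
      exact norm_le_norm_sub_of_smul_add_smul_eq_zero (hcmass B₂ hB₂) (hcmass B₁ hB₁).le
        ((add_comm _ _).trans hbal)
    rw [hQ, Pi.sub_apply, PcZ_merge_apply_of_notMem hB₁ hB₂ (by simp [hk₁, hk₂]), sub_self,
      norm_zero]
    exact norm_nonneg _
  have hQij : Q i - Q j = PcZ mass Z x i - PcZ mass Z x j := by
    rw [hQi, hQj, PcZ_apply_of_mem hB₁ hi, PcZ_apply_of_mem hB₂ hj, sub_sub_sub_cancel_right]
  rw [← hQij]
  exact mnorm_sq_le_totalMass_mul (fun k => (hm k).le) hnorm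

theorem mul_norm_PcZ_sub_sq_le {μ : ℝ} (hμ : 0 ≤ μ) (hμm : ∀ i, μ ≤ mass i)
    {C : Finset (Fin N)} {i j : Fin N} (hi : i ∈ C) (hj : j ∈ C) (hij : i ≠ j) (x : Conf N n) :
    μ * ‖PcZ mass Z x i - PcZ mass Z x j‖ ^ 2 ≤
      4 * (mnorm mass (P0C mass C x) ^ 2 + mnorm mass (P0Z mass Z x) ^ 2) := by
  have hsplit : PcZ mass Z x i - PcZ mass Z x j =
      (P0C mass C x i - P0C mass C x j) - (P0Z mass Z x i - P0Z mass Z x j) := by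
    simp only [P0C, P0Z, Pi.sub_apply, if_pos hi, if_pos hj]
    abel
  have hC := mul_norm_sub_sq_le hμ hμm (P0C mass C x) hij
  have hZ := mul_norm_sub_sq_le hμ hμm (P0Z mass Z x) hij
  rw [hsplit]
  nlinarith [norm_sub_sq_le (P0C mass C x i - P0C mass C x j) (P0Z mass Z x i - P0Z mass Z x j)]

end Cones

theorem sq_mul_le_of_gap_bounds {m M K A d s q r P P₀ : ℝ} (hm : 0 < m) (h2m : 2 * m ≤ M)
    (hd : m ^ 3 / M ^ 3 * A - K ^ 2 > d ^ 2) (hs : 0 ≤ s) (hq : A * s ≤ q) (hqr : q ≤ M * r)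
    (hr : m * r ≤ 4 * (P + P₀)) (hP₀ : P₀ ≤ K ^ 2 * s) : d ^ 2 * s ≤ P := by
  have hM : 0 < M := by linarith
  have hA : 0 < A := pos_of_mul_pos_right (by nlinarith [sq_nonneg d, sq_nonneg K])
    (by positivity : (0 : ℝ) ≤ m ^ 3 / M ^ 3)
  -- Since `M ≥ 2m`, the AZS constant `m³/M³` is at most the `m / (4M)` produced by the estimates.
  have hcoef : m ^ 3 / M ^ 3 * A ≤ m / (4 * M) * A := by
    refine mul_le_mul_of_nonneg_right ?_ hA.le
    have h4 : 4 * m ^ 2 ≤ M ^ 2 := by nlinarith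
    rw [div_le_div_iff₀ (by positivity) (by positivity)]
    nlinarith [mul_le_mul_of_nonneg_left h4 (by positivity : 0 ≤ m * M)]
  have hmain : m / (4 * M) * A * s ≤ P + K ^ 2 * s := by
    rw [div_mul_eq_mul_div, div_mul_eq_mul_div, div_le_iff₀ (by positivity)]
    nlinarith [mul_le_mul_of_nonneg_left hq hm.le, mul_le_mul_of_nonneg_left hqr hm.le]
  nlinarith [mul_le_mul_of_nonneg_right hcoef hs, mul_le_mul_of_nonneg_right hd.le hs]

theorem stmt_14_general (N n : ℕ)
    (mass : Fin N → ℝ) (hm : ∀ i, 0 < mass i)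
    (κ κ' dd : ℕ → ℝ) (hAZS : AZS mass κ κ' dd)
    (Z : Partn N) (hZ : 2 ≤ Z.parts.card)
    (C : Finset (Fin N))
    (hsplit : ∀ C' ∈ Z.parts, ¬ C ⊆ C')
    (x : Conf N n) (hx : x ∈ Mreg mass κ' κ Z) :
    dd Z.parts.card * mnorm mass (PcZ mass Z x) ≤ mnorm mass (P0C mass C x) := by
  obtain ⟨i, hiC, j, hjC, B₁, hB₁, B₂, hB₂, hi, hj, hB⟩ :=
    Z.exists_pair_of_forall_not_subset (card_pos.1 (by omega)) (subset_univ C) hsplit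
  have hij : i ≠ j := fun h => hB (Z.eq_of_mem_parts hB₁ hB₂ hi (h ▸ hj))
  have : Nonempty (Fin N) := ⟨i⟩
  set Z' := Z.merge hB₁ hB₂
  have hcard : #Z'.parts + 1 = #Z.parts := Z.card_merge hB₁ hB₂ hB
  obtain ⟨hpos, hcond⟩ := hAZS
  obtain ⟨-, hgap, -⟩ := hcond #Z'.parts (by omega)
  rw [hcard] at hgap
  obtain ⟨hxZ, hxZ'⟩ := hx
  obtain ⟨hx₀, hZsq⟩ := mnorm_P0Z_sq_le_of_mem_cone (by omega) hxZ
  have hZ'sq := le_mnorm_P0Z_sq_of_notMem_cone (hpos _).2.1.le hx₀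
    fun h => hxZ' (Set.mem_iUnion₂.2 ⟨Z', by omega, h⟩)
  have key := sq_mul_le_of_gap_bounds (minMass_pos hm)
    (two_mul_minMass_le_totalMass (fun k => (hm k).le) hij) hgap (sq_nonneg _)
    (cone_gap_le hm (Z.le_merge hB₁ hB₂) hZsq hZ'sq)
    (mnorm_PcZ_sub_PcZ_merge_sq_le hm hB₁ hB₂ hB hi hj x)
    (mul_norm_PcZ_sub_sq_le (minMass_pos hm).le minMass_le hiC hjC hij x) hZsq
  rw [← pow_le_pow_iff_left₀ (mul_nonneg (hpos _).2.2.le (mnorm_nonneg _)) (mnorm_nonneg _)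
    two_ne_zero, mul_pow]
  exact key

theorem stmt_14 (N n : ℕ) (hN : 2 ≤ N) (hn : 1 ≤ n)
    (mass : Fin N → ℝ) (hm : ∀ i, 0 < mass i)
    (κ κ' dd : ℕ → ℝ) (hAZS : AZS mass κ κ' dd)
    (Z : Partn N) (hZ : 2 ≤ Z.parts.card)
    (C : Finset (Fin N)) (hC : C.Nonempty)
    (hsplit : ∀ C' ∈ Z.parts, ¬ C ⊆ C')
    (x : Conf N n) (hx : x ∈ Mreg mass κ' κ Z) :
    dd Z.parts.card * mnorm mass (PcZ mass Z x) ≤ mnorm mass (P0C mass C x) :=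
  stmt_14_general N n mass hm κ κ' dd hAZS Z hZ C hsplit x hx
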